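/- Converting a reducing-or-covering separators-set pair to a partition: given a (T,c)-reducing-or-covering separators-set pair (𝒮, C) of G, define Z as the union of all separators in 𝒮 and let X_1,…,X_ℓ be the connected components of G − Z. Then ({Z, X_1,…,X_ℓ}, C) is a (T,c)-reducing-or-covering partition-set pair. -/

import Mathlib

variable {V : Type*} [Fintype V] [DecidableEq V]

/-- `S` is an `(A,B)`-weak separator in `G`. -/
def IsWeakSeparator (G : SimpleGraph V) (A B S : Finset V) : Prop :=
  ∀ a ∈ A, ∀ b ∈ B, ∀ p : G.Walk a b, ∃ v ∈ p.support, v ∈ S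

/-- `S` is a minimum `(A,B)`-weak separator in `G`. -/
def IsMinWeakSeparator (G : SimpleGraph V) (A B S : Finset V) : Prop :=
  IsWeakSeparator G A B S ∧ ∀ S' : Finset V, IsWeakSeparator G A B S' → S.card ≤ S'.card

/-- `μ^T(A,B)`: the minimum number of non-terminal vertices over all minimum
`(A,B)`-weak separators. -/
noncomputable def muT (G : SimpleGraph V) (T A B : Finset V) : ℕ :=
  sInf {n | ∃ S : Finset V, IsMinWeakSeparator G A B S ∧ (S \ T).card = n}

/-- A minimum `(A,B)`-weak separator `S` is `T`-brittle if `|S − T| = μ^T(A,B)`. -/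
def IsBrittle (G : SimpleGraph V) (T A B S : Finset V) : Prop :=
  IsMinWeakSeparator G A B S ∧ (S \ T).card = muT G T A B

/-- `W` is an `(x,y)`-separator in `G`. -/
def IsSTSep (G : SimpleGraph V) (x y : V) (W : Finset V) : Prop :=
  x ∉ W ∧ y ∉ W ∧ ∀ p : G.Walk x y, ∃ v ∈ p.support, v ∈ W

/-- `(𝒮, C)` is a `(T,c)`-reducing-or-covering separators-set pair: for every `A, B ⊆ T`
with `μ(A,B) ≤ c`, either `C` covers some minimum `(A,B)`-weak separator, or some member
of `𝒮` contains a non-terminal vertex of some brittle minimum `(A,B)`-weak separator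
(reduces it), or some member of `𝒮` separates two vertices of some brittle minimum
`(A,B)`-weak separator (splits it). -/
def IsROCSepPair (G : SimpleGraph V) (T : Finset V) (c : ℕ)
    (𝒮 : Finset (Finset V)) (C : Finset V) : Prop :=
  ∀ A B : Finset V, A ⊆ T → B ⊆ T →
    (∃ S : Finset V, IsWeakSeparator G A B S ∧ S.card ≤ c) →
    (∃ S : Finset V, IsMinWeakSeparator G A B S ∧ S ⊆ C) ∨
    (∃ S : Finset V, IsBrittle G T A B S ∧ ∃ W ∈ 𝒮, ∃ v ∈ W, v ∈ S ∧ v ∉ T) ∨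
    (∃ S : Finset V, IsBrittle G T A B S ∧
      ∃ W ∈ 𝒮, ∃ x ∈ S, ∃ y ∈ S, x ≠ y ∧ IsSTSep G x y W)

open Classical in
/-- The open neighborhood `N_G(X)`. -/
noncomputable def nbhd (G : SimpleGraph V) (X : Finset V) : Finset V :=
  Finset.univ.filter (fun v => v ∉ X ∧ ∃ x ∈ X, G.Adj v x)

/-- The closed neighborhood `N_G[X] = X ∪ N_G(X)`. -/
noncomputable def closedNbhd (G : SimpleGraph V) (X : Finset V) : Finset V :=
  X ∪ nbhd G X

open Classical in
/-- The connected component of `v` in `G − Z` (for `v ∉ Z`): the set of vertices `u ∉ Z`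
reachable from `v` by a walk avoiding `Z`. -/
noncomputable def compOff (G : SimpleGraph V) (Z : Finset V) (v : V) : Finset V :=
  Finset.univ.filter (fun u => u ∉ Z ∧ ∃ p : G.Walk v u, ∀ w ∈ p.support, w ∉ Z)

/-! If two vertices of `S` both lay in `N[X_i]`, they would be joined by a walk through `X_i`,
which avoids `Z` and hence every member of `𝒮`; so a member of `𝒮` splitting a brittle `S` leaves
a vertex of `S` outside each `N[X_i]`. A member of `𝒮` reducing a brittle `S` puts a non-terminal
vertex of `S` into `Z`, hence outside each `X_i`, so `|(S ∩ X_i) − T| < |S − T| = μ^T(A,B)`. -/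

section

open SimpleGraph

variable {G : SimpleGraph V} {Z W S T : Finset V} {u v x y : V}

@[simp]
lemma mem_compOff : u ∈ compOff G Z v ↔ u ∉ Z ∧ ∃ p : G.Walk v u, ∀ w ∈ p.support, w ∉ Z := by
  simp [compOff]

lemma compOff_subset_of_walk (p : G.Walk u v) (hp : ∀ w ∈ p.support, w ∉ Z) :
    compOff G Z v ⊆ compOff G Z u := by
  intro w hw
  obtain ⟨hwZ, q, hq⟩ := mem_compOff.mp hw
  refine mem_compOff.mpr ⟨hwZ, p.append q, fun x hx => ?_⟩
  rcases (Walk.mem_support_append_iff _ _).mp hx with hx | hx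
  exacts [hp x hx, hq x hx]

lemma compOff_eq_of_walk (p : G.Walk u v) (hp : ∀ w ∈ p.support, w ∉ Z) :
    compOff G Z u = compOff G Z v :=
  (compOff_subset_of_walk p.reverse (by simpa using hp)).antisymm (compOff_subset_of_walk p hp)

lemma exists_walk_of_mem_closedNbhd_compOff (hWZ : W ⊆ Z)
    (hx : x ∈ closedNbhd G (compOff G Z v)) (hxW : x ∉ W) :
    ∃ p : G.Walk x v, ∀ w ∈ p.support, w ∉ W := by
  rcases Finset.mem_union.mp hx with hx | hx
  · obtain ⟨-, q, hq⟩ := mem_compOff.mp hx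
    exact ⟨q.reverse, fun w hw hwW => hq w (by simpa using hw) (hWZ hwW)⟩
  · simp only [nbhd, Finset.mem_filter] at hx
    obtain ⟨-, -, x', hx', hadj⟩ := hx
    obtain ⟨-, q, hq⟩ := mem_compOff.mp hx'
    refine ⟨Walk.cons hadj q.reverse, fun w hw => ?_⟩
    rcases List.mem_cons.mp (Walk.support_cons hadj _ ▸ hw) with rfl | hw
    · exact hxW
    · exact fun hwW => hq w (by simpa using hw) (hWZ hwW)

lemma notMem_closedNbhd_compOff_of_isSTSep (hWZ : W ⊆ Z) (hsep : IsSTSep G x y W) :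
    x ∉ closedNbhd G (compOff G Z v) ∨ y ∉ closedNbhd G (compOff G Z v) := by
  obtain ⟨hxW, hyW, hWsep⟩ := hsep
  by_contra! h
  obtain ⟨px, hpx⟩ := exists_walk_of_mem_closedNbhd_compOff hWZ h.1 hxW
  obtain ⟨py, hpy⟩ := exists_walk_of_mem_closedNbhd_compOff hWZ h.2 hyW
  obtain ⟨w, hw, hwW⟩ := hWsep (px.append py.reverse)
  rcases (Walk.mem_support_append_iff _ _).mp hw with hw | hw
  · exact hpx w hw hwW
  · exact hpy w (by simpa using hw) hwW

lemma card_inter_closedNbhd_compOff_lt (hWZ : W ⊆ Z) (hxS : x ∈ S) (hyS : y ∈ S)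
    (hsep : IsSTSep G x y W) : (S ∩ closedNbhd G (compOff G Z v)).card < S.card := by
  apply Finset.card_lt_card
  rw [Finset.ssubset_iff_of_subset Finset.inter_subset_left]
  rcases notMem_closedNbhd_compOff_of_isSTSep (v := v) hWZ hsep with hx | hy
  · exact ⟨x, hxS, fun h => hx (Finset.mem_inter.mp h).2⟩
  · exact ⟨y, hyS, fun h => hy (Finset.mem_inter.mp h).2⟩

lemma card_inter_compOff_sdiff_lt (hxS : x ∈ S) (hxT : x ∉ T) (hxZ : x ∈ Z) :
    ((S ∩ compOff G Z v) \ T).card < (S \ T).card := by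
  apply Finset.card_lt_card
  rw [Finset.ssubset_iff_of_subset (Finset.sdiff_subset_sdiff Finset.inter_subset_left le_rfl)]
  refine ⟨x, Finset.mem_sdiff.mpr ⟨hxS, hxT⟩, fun h => ?_⟩
  exact (mem_compOff.mp (Finset.mem_inter.mp (Finset.mem_sdiff.mp h).1).2).1 hxZ

end

theorem rocSepPair_to_rocPartitionPair_general (G : SimpleGraph V) (T : Finset V) (c : ℕ)
    (𝒮 : Finset (Finset V)) (C : Finset V)
    (hroc : IsROCSepPair G T c 𝒮 C) :
    (∀ u v : V, u ∉ 𝒮.biUnion id → v ∉ 𝒮.biUnion id →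
        compOff G (𝒮.biUnion id) u ≠ compOff G (𝒮.biUnion id) v →
        ∀ p : G.Walk u v, ∃ w ∈ p.support, w ∈ 𝒮.biUnion id) ∧
    (∀ A B : Finset V, A ⊆ T → B ⊆ T →
      (∃ S : Finset V, IsWeakSeparator G A B S ∧ S.card ≤ c) →
      ∃ S : Finset V, IsMinWeakSeparator G A B S ∧
        (S ⊆ C ∨
          (∀ v : V, v ∉ 𝒮.biUnion id →
            (S ∩ closedNbhd G (compOff G (𝒮.biUnion id) v)).card + 1 ≤ S.card) ∨
          (∀ v : V, v ∉ 𝒮.biUnion id →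
            ((S ∩ compOff G (𝒮.biUnion id) v) \ T).card + 1 ≤ muT G T A B))) := by
  refine ⟨fun u v _ _ hne p => ?_, fun A B hA hB hμ => ?_⟩
  · by_contra! h
    exact hne (compOff_eq_of_walk p h)
  rcases hroc A B hA hB hμ with ⟨S, hS, hSC⟩ | ⟨S, hS, W, hW, x, hxW, hxS, hxT⟩ |
    ⟨S, hS, W, hW, x, hxS, y, hyS, -, hsep⟩
  · exact ⟨S, hS, Or.inl hSC⟩
  · refine ⟨S, hS.1, Or.inr (Or.inr fun v _ => ?_)⟩
    rw [← hS.2]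
    exact card_inter_compOff_sdiff_lt hxS hxT (Finset.subset_biUnion_of_mem id hW hxW)
  · refine ⟨S, hS.1, Or.inr (Or.inl fun v _ => ?_)⟩
    exact card_inter_closedNbhd_compOff_lt (Finset.subset_biUnion_of_mem id hW) hxS hyS hsep

/-- Converting a `(T,c)`-reducing-or-covering separators-set pair `(𝒮, C)` to a partition:
with `Z` the union of all separators in `𝒮` and the parts `X_1, …, X_ℓ` the connected
components of `G − Z`, the pair `({Z, X_1, …, X_ℓ}, C)` is a `(T,c)`-reducing-or-covering
partition-set pair: `Z` separates distinct components, and for every `A, B ⊆ T` with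
`μ(A,B) ≤ c` there is a minimum `(A,B)`-weak separator `S` such that `C` covers `S`, or
`Π` splits `S` (`|S ∩ N[X_i]| ≤ |S| − 1` for all parts), or `Π` `T`-hits `S`
(`|(S ∩ X_i) − T| ≤ μ^T(A,B) − 1` for all parts). -/
theorem rocSepPair_to_rocPartitionPair (G : SimpleGraph V) (T : Finset V) (c : ℕ)
    (hc : 0 < c) (𝒮 : Finset (Finset V)) (C : Finset V)
    (hroc : IsROCSepPair G T c 𝒮 C) :
    (∀ u v : V, u ∉ 𝒮.biUnion id → v ∉ 𝒮.biUnion id →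
        compOff G (𝒮.biUnion id) u ≠ compOff G (𝒮.biUnion id) v →
        ∀ p : G.Walk u v, ∃ w ∈ p.support, w ∈ 𝒮.biUnion id) ∧
    (∀ A B : Finset V, A ⊆ T → B ⊆ T →
      (∃ S : Finset V, IsWeakSeparator G A B S ∧ S.card ≤ c) →
      ∃ S : Finset V, IsMinWeakSeparator G A B S ∧
        (S ⊆ C ∨
          (∀ v : V, v ∉ 𝒮.biUnion id →
            (S ∩ closedNbhd G (compOff G (𝒮.biUnion id) v)).card + 1 ≤ S.card) ∨
          (∀ v : V, v ∉ 𝒮.biUnion id →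
            ((S ∩ compOff G (𝒮.biUnion id) v) \ T).card + 1 ≤ muT G T A B))) :=
  rocSepPair_to_rocPartitionPair_general G T c 𝒮 C hroc
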